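/- arXiv:2208.04893 — 2 statements merged into one kernel-verified Lean document; each statement's English description precedes it below -/
import Mathlib

section
/- Let M be a paving matroid of rank k on n elements, let λ_h be the number of hyperplanes of size h, and h_max the size of the largest hyperplane. Then ∑_{h≥k} λ_h·(h choose k) ≤ ((h_max − k + 1)/(n − k + 1))·(n choose k). -/
open Set

variable {α : Type*}

/-- The (natural-number valued) rank of a set `X` in a matroid `M`:
the maximum cardinality of an independent subset of `X`. -/
noncomputable def Matroid.nrk (M : Matroid α) (X : Set α) : ℕ :=
  sSup (Set.ncard '' {I | M.Indep I ∧ I ⊆ X})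

/-- The rank of the matroid `M`. -/
noncomputable def Matroid.nRank (M : Matroid α) : ℕ := M.nrk M.E

/-- The cusp of a subset `A` in a matroid `M` of rank `k`:
all `k`-element subsets `S` of the ground set with `|S ∩ A| ≥ rk A + 1`. -/
def Matroid.cusp (M : Matroid α) (A : Set α) : Set (Set α) :=
  {S | S ⊆ M.E ∧ S.ncard = M.nRank ∧ M.nrk A + 1 ≤ (S ∩ A).ncard}

/-- A subset `A` of a matroid `M` is stressed if both the restriction `M | A`
and the contraction `M / A` are uniform matroids; for a finite matroid this is
equivalent to the rank functions of the restriction and of the contraction being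
those of uniform matroids. -/
def Matroid.StressedSubset (M : Matroid α) (A : Set α) : Prop :=
  (∀ S ⊆ A, M.nrk S = min S.ncard (M.nrk A)) ∧
  (∀ Y ⊆ M.E \ A, M.nrk (A ∪ Y) = M.nrk A + min Y.ncard (M.nRank - M.nrk A))

/-- A hyperplane of `M`: a flat of rank `rk(M) − 1`. -/
def Matroid.Hyp (M : Matroid α) (H : Set α) : Prop :=
  M.IsFlat H ∧ M.nrk H + 1 = M.nRank

/-! In a paving matroid of rank `k` every `(k-1)`-set is independent and hence spans a unique
hyperplane, its closure. So the `k`-subsets of distinct hyperplanes are distinct dependent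
`k`-sets, and the left-hand side is at most the number `D` of dependent `k`-sets. Double count the
pairs `I ⊂ S` with `|I| = k - 1` and `S` a dependent `k`-set: each `S` has `k` such `I`, while
`S = I ∪ {x}` is dependent only for `x ∈ cl(I) \ I`, at most `h_max - k + 1` choices. Hence
`D k ≤ C(n, k-1) (h_max - k + 1)`, and `C(n, k-1) (n - k + 1) = C(n, k) k`. -/

lemma Nat.choose_mul_eq_choose_sub_one_mul {n k : ℕ} (hk : 1 ≤ k) (hkn : k ≤ n) :
    n.choose k * k = n.choose (k - 1) * (n - k + 1) := by
  have := Nat.choose_succ_right_eq n (k - 1)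
  rw [Nat.sub_add_cancel hk] at this
  rw [this]
  congr 1
  omega

namespace Matroid

variable {M : Matroid α} {F H H₁ H₂ I S X : Set α}

lemma nrk_le_of_forall {m : ℕ} (h : ∀ I, M.Indep I → I ⊆ X → I.ncard ≤ m) : M.nrk X ≤ m :=
  csSup_le ⟨0, ∅, ⟨M.empty_indep, empty_subset X⟩, by simp⟩
    (by rintro _ ⟨I, ⟨hI, hIX⟩, rfl⟩; exact h I hI hIX)

section Finite

variable [Finite α]

lemma Indep.ncard_le_nrk (hI : M.Indep I) (hIX : I ⊆ X) : I.ncard ≤ M.nrk X :=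
  le_csSup (Set.toFinite _).bddAbove ⟨I, ⟨hI, hIX⟩, rfl⟩

lemma nRank_le_card : M.nRank ≤ Nat.card α :=
  nrk_le_of_forall fun I _ _ ↦ ncard_le_card I

lemma Indep.nrk_closure (hI : M.Indep I) : M.nrk (M.closure I) = I.ncard := by
  refine le_antisymm (nrk_le_of_forall fun J hJ hJX ↦ ?_)
    (hI.ncard_le_nrk (M.subset_closure I hI.subset_ground))
  obtain ⟨J', hJ', hJJ'⟩ := hJ.subset_isBasis_of_subset hJX (M.closure_subset_ground I)
  have hcard : J'.ncard = I.ncard := by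
    rw [ncard_def, hJ'.encard_eq_encard hI.isBasis_closure, ← ncard_def]
  exact hcard ▸ ncard_le_ncard hJJ'

lemma dep_of_nrk_lt_ncard (hSX : S ⊆ X) (hSE : S ⊆ M.E) (h : M.nrk X < S.ncard) : M.Dep S :=
  ⟨fun hS ↦ (hS.ncard_le_nrk hSX).not_gt h, hSE⟩

lemma IsFlat.eq_closure_of_indep (hF : M.IsFlat F) (hI : M.Indep I) (hIF : I ⊆ F)
    (h : M.nrk F ≤ I.ncard) : F = M.closure I := by
  refine subset_antisymm (fun x hxF ↦ ?_) ((M.closure_subset_closure hIF).trans_eq hF.closure)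
  by_cases hxI : x ∈ I
  · exact M.subset_closure I hI.subset_ground hxI
  refine (hI.mem_closure_iff_of_notMem hxI).2 (dep_of_nrk_lt_ncard (insert_subset hxF hIF)
    (insert_subset (hF.subset_ground hxF) hI.subset_ground) ?_)
  rw [ncard_insert_of_notMem hxI]
  omega

lemma Hyp.eq_closure_of_indep (hH : M.Hyp H) (hI : M.Indep I) (hIH : I ⊆ H)
    (h : I.ncard + 1 = M.nRank) : H = M.closure I :=
  hH.1.eq_closure_of_indep hI hIH (by have := hH.2; omega)

lemma Indep.hyp_closure (hI : M.Indep I) (h : I.ncard + 1 = M.nRank) : M.Hyp (M.closure I) :=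
  ⟨M.isFlat_closure I, by rw [hI.nrk_closure, h]⟩

end Finite

lemma indep_of_ncard_lt_nRank (hpav : ∀ D, M.Dep D → M.nRank ≤ D.ncard) (hIE : I ⊆ M.E)
    (h : I.ncard < M.nRank) : M.Indep I := by
  by_contra hI
  exact (hpav I ⟨hI, hIE⟩).not_gt h

lemma Hyp.eq_of_subset_of_subset [Finite α] (hpav : ∀ D, M.Dep D → M.nRank ≤ D.ncard)
    (hH₁ : M.Hyp H₁) (hH₂ : M.Hyp H₂) (hS₁ : S ⊆ H₁) (hS₂ : S ⊆ H₂)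
    (hS : M.nRank ≤ S.ncard + 1) : H₁ = H₂ := by
  have hrank := hH₁.2
  obtain ⟨I, hIS, hIcard⟩ := exists_subset_card_eq (s := S) (n := M.nRank - 1) (by omega)
  have hI : M.Indep I := indep_of_ncard_lt_nRank hpav
    (hIS.trans (hS₁.trans hH₁.1.subset_ground)) (by omega)
  rw [hH₁.eq_closure_of_indep hI (hIS.trans hS₁) (by omega),
    hH₂.eq_closure_of_indep hI (hIS.trans hS₂) (by omega)]

section Fintype

variable [Fintype α]

noncomputable def depFinsets (M : Matroid α) (r : ℕ) : Finset (Finset α) :=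
  (Set.toFinite {S : Finset α | S.card = r ∧ M.Dep ↑S}).toFinset

lemma mem_depFinsets {r : ℕ} {S : Finset α} : S ∈ M.depFinsets r ↔ S.card = r ∧ M.Dep ↑S :=
  Set.Finite.mem_toFinset _

open Finset in
lemma sum_choose_ncard_hyp_le_card_depFinsets (hpav : ∀ D, M.Dep D → M.nRank ≤ D.ncard) :
    ∑ H ∈ (Set.toFinite {H : Set α | M.Hyp H}).toFinset, H.ncard.choose M.nRank
      ≤ #(M.depFinsets M.nRank) := by
  classical
  set hyps := (Set.toFinite {H : Set α | M.Hyp H}).toFinset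
  have mem_hyps {H : Set α} : H ∈ hyps ↔ M.Hyp H := Set.Finite.mem_toFinset _
  let ksets : Set α → Finset (Finset α) := fun H ↦ H.toFinset.powersetCard M.nRank
  have mem_ksets {H : Set α} {S : Finset α} : S ∈ ksets H ↔ ↑S ⊆ H ∧ #S = M.nRank := by
    simp [ksets, mem_powersetCard, ← Finset.coe_subset]
  have hdisj : (hyps : Set (Set α)).PairwiseDisjoint ksets := by
    intro H₁ hH₁ H₂ hH₂ hne
    refine disjoint_left.2 fun S hS₁ hS₂ ↦ hne ?_
    rw [mem_ksets] at hS₁ hS₂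
    exact Hyp.eq_of_subset_of_subset hpav (mem_hyps.1 hH₁) (mem_hyps.1 hH₂) hS₁.1 hS₂.1
      (by rw [ncard_coe_finset, hS₁.2]; omega)
  have hsub : hyps.biUnion ksets ⊆ M.depFinsets M.nRank := by
    simp only [biUnion_subset_iff_forall_subset]
    intro H hH S hS
    rw [mem_ksets] at hS
    refine mem_depFinsets.2 ⟨hS.2, dep_of_nrk_lt_ncard hS.1
      (hS.1.trans (mem_hyps.1 hH).1.subset_ground) ?_⟩
    rw [ncard_coe_finset, hS.2, ← (mem_hyps.1 hH).2]
    omega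
  calc ∑ H ∈ hyps, H.ncard.choose M.nRank = ∑ H ∈ hyps, #(ksets H) := by
        simp [ksets, ncard_eq_toFinset_card']
    _ = #(hyps.biUnion ksets) := (card_biUnion hdisj).symm
    _ ≤ _ := card_le_card hsub

open Finset in
lemma Indep.card_superset_depFinsets_le [DecidableEq α] {I : Finset α} (hI : M.Indep I) :
    #((M.depFinsets (#I + 1)).filter (I ⊆ ·)) ≤ (M.closure I \ I).ncard := by
  set T := (Set.toFinite (M.closure I \ I)).toFinset
  have hsub : (M.depFinsets (#I + 1)).filter (I ⊆ ·) ⊆ T.image (insert · I) := by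
    intro S hS
    obtain ⟨hS, hIS⟩ := mem_filter.1 hS
    obtain ⟨hcard, hdep⟩ := mem_depFinsets.1 hS
    obtain ⟨x, -, rfl⟩ := exists_eq_insert_iff.2 ⟨hIS, hcard.symm⟩
    rw [coe_insert, hI.insert_dep_iff] at hdep
    exact mem_image_of_mem _ ((Set.Finite.mem_toFinset _).2 hdep)
  calc _ ≤ #(T.image (insert · I)) := card_le_card hsub
    _ ≤ #T := card_image_le
    _ = (M.closure I \ I).ncard := (ncard_eq_toFinset_card _).symm

open Finset in
lemma card_depFinsets_mul_le (hE : M.E = univ) (hpav : ∀ D, M.Dep D → M.nRank ≤ D.ncard)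
    {m : ℕ} (hm : ∀ H, M.Hyp H → H.ncard ≤ m) (hrank : 1 ≤ M.nRank) :
    #(M.depFinsets M.nRank) * M.nRank
      ≤ (Fintype.card α).choose (M.nRank - 1) * (m - M.nRank + 1) := by
  classical
  have hkpred : M.nRank - 1 + 1 = M.nRank := Nat.sub_add_cancel hrank
  have hdeg_dep : ∀ S ∈ M.depFinsets M.nRank,
      M.nRank ≤ #((univ.powersetCard (M.nRank - 1)).bipartiteAbove (fun S I ↦ I ⊆ S) S) := by
    intro S hS
    have hS : #S = M.nRank := (mem_depFinsets.1 hS).1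
    calc M.nRank = #(S.powersetCard (M.nRank - 1)) := by
          rw [card_powersetCard, hS, Nat.choose_symm_of_eq_add hkpred.symm, Nat.choose_one_right]
      _ ≤ _ := card_le_card fun I hI ↦ by
          obtain ⟨hIS, hIcard⟩ := mem_powersetCard.1 hI
          exact mem_filter.2 ⟨mem_powersetCard.2 ⟨subset_univ I, hIcard⟩, hIS⟩
  have hdeg_indep : ∀ I ∈ univ.powersetCard (M.nRank - 1),
      #((M.depFinsets M.nRank).bipartiteBelow (fun S I ↦ I ⊆ S) I) ≤ m - M.nRank + 1 := by
    intro I hI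
    have hIcard : #I + 1 = M.nRank := by rw [(mem_powersetCard.1 hI).2, hkpred]
    have hIncard : (I : Set α).ncard + 1 = M.nRank := by rwa [ncard_coe_finset]
    have hIE : (I : Set α) ⊆ M.E := hE ▸ Set.subset_univ _
    have hindep : M.Indep I := indep_of_ncard_lt_nRank hpav hIE (by omega)
    have hclosure : (M.closure I).ncard ≤ m := hm _ (hindep.hyp_closure hIncard)
    calc _ ≤ (M.closure I \ I).ncard := hIcard ▸ hindep.card_superset_depFinsets_le
      _ ≤ m - M.nRank + 1 := by
          rw [ncard_sdiff (M.subset_closure _ hIE)]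
          omega
  simpa using card_mul_le_card_mul _ hdeg_dep hdeg_indep

end Fintype

end Matroid

open Finset Matroid in
/-- bound on the hyperplanes of a paving matroid. If `M` is a paving
matroid of rank `k` on `n` elements, `λ_h` is the number of hyperplanes of size `h`, and
`hm` is the size of the largest hyperplane, then
`∑_{h ≥ k} λ_h·(h choose k) ≤ ((hm − k + 1)/(n − k + 1))·(n choose k)`; here the sum
`∑_{h ≥ k} λ_h·(h choose k)` is written as a sum of `(|H| choose k)` over all hyperplanes
`H`, and the inequality is cleared of denominators. -/
theorem paving_hyperplane_bound [Fintype α] (M : Matroid α) (hE : M.E = Set.univ)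
    {n k hm : ℕ} (hn : Fintype.card α = n) (hk : M.nRank = k)
    (hpav : ∀ D, M.Dep D → k ≤ D.ncard)
    (hmax : IsGreatest {m | ∃ H, M.Hyp H ∧ H.ncard = m} hm) :
    (∑ H ∈ (Set.toFinite {H : Set α | M.Hyp H}).toFinset, (H.ncard).choose k) * (n - k + 1)
      ≤ (hm - k + 1) * n.choose k := by
  subst hk hn
  obtain ⟨H₀, hH₀, -⟩ := hmax.1
  have hrank : 1 ≤ M.nRank := by have := hH₀.2; omega
  have hcard : M.nRank ≤ Fintype.card α := Nat.card_eq_fintype_card (α := α) ▸ M.nRank_le_card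
  have hsum := M.sum_choose_ncard_hyp_le_card_depFinsets hpav
  have hcount := M.card_depFinsets_mul_le hE hpav (fun H hH ↦ hmax.2 ⟨H, hH, rfl⟩) hrank
  refine Nat.le_of_mul_le_mul_right ?_ hrank
  calc _ ≤ #(M.depFinsets M.nRank) * M.nRank * (Fintype.card α - M.nRank + 1) := by
        rw [mul_right_comm]
        exact Nat.mul_le_mul_right _ (Nat.mul_le_mul_right _ hsum)
    _ ≤ (Fintype.card α).choose (M.nRank - 1) * (hm - M.nRank + 1)
          * (Fintype.card α - M.nRank + 1) := Nat.mul_le_mul_right _ hcount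
    _ = (hm - M.nRank + 1) * (Fintype.card α).choose M.nRank * M.nRank := by
        rw [mul_assoc _ _ M.nRank, Nat.choose_mul_eq_choose_sub_one_mul hrank hcard]
        ring
end

section
/- Let M be a loopless and coloopless matroid. A subset A is a stressed subset with non-empty cusp if and only if A is a cyclic flat that covers the bottom element ∅ and is covered by the top element E in the lattice of cyclic flats of M. -/
open Set

variable {α : Type*}

/-- A circuit of `M`: a minimal dependent set. -/
def Matroid.Circ (M : Matroid α) (C : Set α) : Prop := Minimal M.Dep C

/-- A cyclic set of `M`: a (possibly empty) union of circuits. -/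
def Matroid.Cyclic (M : Matroid α) (A : Set α) : Prop :=
  ∀ e ∈ A, ∃ C ⊆ A, M.Circ C ∧ e ∈ C

/-- A cyclic flat of `M`: a flat that is a union of circuits. -/
def Matroid.CyclicFlat (M : Matroid α) (A : Set α) : Prop :=
  M.IsFlat A ∧ M.Cyclic A

/-! For finite `M`, `A` is stressed iff `M | A` and `M / A` are uniform, and its cusp is non-empty
iff `A` is dependent and non-spanning. In a uniform `M | A` of rank `r A < |A|`, every
`(r A + 1)`-subset of `A` is a circuit, so `A` is cyclic, and every dependent subset spans `A`, so
`A` is an atom of the cyclic flats. If `M / A` is uniform and `A` is non-spanning, `A` is closed;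
a cyclic flat `Z` with `A ⊊ Z ⊊ E` keeps its rank when an element of `Z \ A` is removed, whereas
uniformity of `M / A` makes that element raise the rank, so `A` is a coatom. Conversely, if `A` is
an atom, the closure of a circuit in a dependent `S ⊆ A` is `A`, so `r S = r A`; if `A` is a
coatom, an element outside `A` spanned by `A` and other elements `Y` lies on a circuit whose union
with `A` spans `E`, so below rank `r M` the elements outside `A` are independent over `A`. -/

namespace Matroid

variable {M : Matroid α} {A C S X Y Z : Set α} {e : α}

lemma IsCircuit.cyclic (hC : M.IsCircuit C) : M.Cyclic C :=
  fun _ he ↦ ⟨C, Subset.rfl, hC, he⟩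

lemma Cyclic.union (hX : M.Cyclic X) (hY : M.Cyclic Y) : M.Cyclic (X ∪ Y) := by
  rintro e (he | he)
  · obtain ⟨C, hCX, hC, heC⟩ := hX e he
    exact ⟨C, hCX.trans subset_union_left, hC, heC⟩
  · obtain ⟨C, hCY, hC, heC⟩ := hY e he
    exact ⟨C, hCY.trans subset_union_right, hC, heC⟩

lemma Cyclic.subset_ground (hX : M.Cyclic X) : X ⊆ M.E := fun e he ↦
  let ⟨_, _, (hC : M.IsCircuit _), heC⟩ := hX e he
  hC.subset_ground heC

lemma Cyclic.dep (hX : M.Cyclic X) (hne : X.Nonempty) : M.Dep X := by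
  obtain ⟨e, he⟩ := hne
  obtain ⟨C, hCX, hC : M.IsCircuit C, -⟩ := hX e he
  exact hC.dep.superset hCX hX.subset_ground

lemma Cyclic.subset_closure_sdiff_singleton (hX : M.Cyclic X) (e : α) :
    X ⊆ M.closure (X \ {e}) := by
  intro f hf
  obtain rfl | hfe := eq_or_ne f e
  · obtain ⟨C, hCX, hC : M.IsCircuit C, hfC⟩ := hX f hf
    exact M.closure_subset_closure (sdiff_subset_sdiff_left hCX)
      (hC.mem_closure_sdiff_singleton_of_mem hfC)
  · exact M.subset_closure _ (sdiff_subset.trans hX.subset_ground) ⟨hf, hfe⟩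

lemma Cyclic.closure (hX : M.Cyclic X) : M.Cyclic (M.closure X) := by
  have hXcl := M.subset_closure X hX.subset_ground
  intro e he
  by_cases heX : e ∈ X
  · obtain ⟨C, hCX, hC, heC⟩ := hX e heX
    exact ⟨C, hCX.trans hXcl, hC, heC⟩
  · obtain ⟨C, hCX, hC, heC⟩ := exists_isCircuit_of_mem_closure he heX
    exact ⟨C, hCX.trans (insert_subset he hXcl), hC, heC⟩

lemma Cyclic.cyclicFlat_closure (hX : M.Cyclic X) : M.CyclicFlat (M.closure X) :=
  ⟨M.isFlat_closure X, hX.closure⟩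

section RankFinite

variable [M.RankFinite]

lemma cast_nrk (X : Set α) : (M.nrk X : ℕ∞) = M.eRk X := by
  obtain ⟨I, hI⟩ := M.exists_isBasis' X
  have hmax : IsGreatest (ncard '' {J | M.Indep J ∧ J ⊆ X}) I.ncard := by
    refine ⟨⟨I, ⟨hI.indep, hI.subset⟩, rfl⟩, ?_⟩
    rintro _ ⟨J, ⟨hJ, hJX⟩, rfl⟩
    have hle := (hJ.encard_le_eRk_of_subset hJX).trans hI.eRk_eq_encard.le
    rwa [← hJ.finite.cast_ncard_eq, ← hI.indep.finite.cast_ncard_eq, Nat.cast_le] at hle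
  rw [nrk, hmax.csSup_eq, hI.indep.finite.cast_ncard_eq, hI.eRk_eq_encard]

lemma cast_nRank : (M.nRank : ℕ∞) = M.eRank := by
  rw [nRank, cast_nrk, eRk_ground]

lemma nrk_mono (hXY : X ⊆ Y) : M.nrk X ≤ M.nrk Y := by
  rw [← Nat.cast_le (α := ℕ∞), cast_nrk, cast_nrk]
  exact M.eRk_mono hXY

lemma nrk_le_nRank (X : Set α) : M.nrk X ≤ M.nRank := by
  rw [← Nat.cast_le (α := ℕ∞), cast_nrk, cast_nRank]
  exact M.eRk_le_eRank X

lemma nrk_closure (X : Set α) : M.nrk (M.closure X) = M.nrk X := by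
  rw [← Nat.cast_inj (R := ℕ∞), cast_nrk, cast_nrk, eRk_closure_eq]

lemma nrk_le_of_subset_closure (h : X ⊆ M.closure Y) : M.nrk X ≤ M.nrk Y :=
  (nrk_mono h).trans_eq (nrk_closure Y)

lemma Indep.nrk_eq_ncard {I : Set α} (hI : M.Indep I) : M.nrk I = I.ncard := by
  rw [← Nat.cast_inj (R := ℕ∞), cast_nrk, hI.eRk_eq_encard, hI.finite.cast_ncard_eq]

lemma nrk_le_ncard (hX : X.Finite) : M.nrk X ≤ X.ncard := by
  rw [← Nat.cast_le (α := ℕ∞), cast_nrk, hX.cast_ncard_eq]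
  exact M.eRk_le_encard X

lemma Dep.nrk_lt_ncard (hX : M.Dep X) (hXfin : X.Finite) : M.nrk X < X.ncard := by
  rw [← Nat.cast_lt (α := ℕ∞), cast_nrk, hXfin.cast_ncard_eq]
  exact M.eRk_lt_encard_of_dep_of_finite hXfin hX

lemma nrk_union_le_nrk_add_ncard (hY : Y.Finite) : M.nrk (X ∪ Y) ≤ M.nrk X + Y.ncard := by
  rw [← Nat.cast_le (α := ℕ∞), Nat.cast_add, cast_nrk, cast_nrk, hY.cast_ncard_eq]
  exact M.eRk_union_le_eRk_add_encard X Y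

lemma nrk_insert_of_notMem_closure (he : e ∈ M.E \ M.closure X) :
    M.nrk (insert e X) = M.nrk X + 1 := by
  rw [← Nat.cast_inj (R := ℕ∞), Nat.cast_add, cast_nrk, cast_nrk, Nat.cast_one]
  exact eRk_insert_eq_add_one he

lemma closure_eq_closure_of_subset_of_nrk_le (hXY : X ⊆ Y) (h : M.nrk Y ≤ M.nrk X) :
    M.closure X = M.closure Y := by
  rw [← Nat.cast_le (α := ℕ∞), cast_nrk, cast_nrk] at h
  exact (M.isRkFinite_set X).closure_eq_closure_of_subset_of_eRk_ge_eRk hXY h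

lemma IsFlat.nrk_lt_nRank {F : Set α} (hF : M.IsFlat F) (hFE : F ≠ M.E) : M.nrk F < M.nRank := by
  refine (nrk_le_nRank F).lt_of_ne fun h ↦ hFE ?_
  have hsp : M.Spanning F := by
    rw [spanning_iff_eRk_le hF.subset_ground, ← cast_nrk, ← cast_nRank, h]
  rw [← hF.closure, hsp.closure_eq]

lemma Cyclic.nrk_sdiff_singleton (hX : M.Cyclic X) (e : α) : M.nrk (X \ {e}) = M.nrk X :=
  (nrk_mono sdiff_subset).antisymm (nrk_le_of_subset_closure (hX.subset_closure_sdiff_singleton e))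

lemma nrk_union_eq_nrk_add_ncard (hYE : Y ⊆ M.E) (hY : Y.Finite)
    (h : ∀ e ∈ Y, e ∉ M.closure (X ∪ (Y \ {e}))) : M.nrk (X ∪ Y) = M.nrk X + Y.ncard := by
  induction Y, hY using Set.Finite.induction_on with
  | empty => simp
  | @insert a Y haY hY ih =>
    have hY' : ∀ e ∈ Y, e ∉ M.closure (X ∪ (Y \ {e})) := fun e he hcl ↦
      h e (mem_insert_of_mem a he) (M.closure_subset_closure
        (union_subset_union_right X (sdiff_subset_sdiff_left (subset_insert a Y))) hcl)
    have ha : a ∉ M.closure (X ∪ Y) := by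
      simpa only [insert_sdiff_self_of_notMem haY] using h a (mem_insert a Y)
    rw [union_insert, nrk_insert_of_notMem_closure ⟨hYE (mem_insert a Y), ha⟩,
      ih ((subset_insert a Y).trans hYE) hY', ncard_insert_of_notMem haY hY, add_assoc]

lemma nrk_eq_of_dep_subset (hA : M.IsFlat A)
    (hmin : ∀ Z, M.CyclicFlat Z → Z ⊆ A → Z = ∅ ∨ Z = A) (hSA : S ⊆ A) (hS : M.Dep S) :
    M.nrk S = M.nrk A := by
  obtain ⟨C, hCS, hC⟩ := hS.exists_isCircuit_subset
  have hclA : M.closure C ⊆ A := hA.closure ▸ M.closure_subset_closure (hCS.trans hSA)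
  obtain hC0 | hCA := hmin _ hC.cyclic.cyclicFlat_closure hclA
  · obtain ⟨e, he⟩ := hC.nonempty
    simpa [hC0] using M.subset_closure C hC.subset_ground he
  · refine (nrk_mono hSA).antisymm ?_
    rw [← hCA, nrk_closure]
    exact nrk_mono hCS

lemma nrk_union_eq_nrk_add_ncard_of_lt (hA : M.Cyclic A)
    (hmax : ∀ Z, M.CyclicFlat Z → A ⊆ Z → Z = A ∨ Z = M.E) (hY : Y ⊆ M.E \ A) (hYfin : Y.Finite)
    (hlt : M.nrk (A ∪ Y) < M.nRank) : M.nrk (A ∪ Y) = M.nrk A + Y.ncard := by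
  refine nrk_union_eq_nrk_add_ncard (hY.trans sdiff_subset) hYfin fun e heY hcl ↦ ?_
  have heA : e ∉ A ∪ (Y \ {e}) := fun h ↦ h.elim (hY heY).2 fun h ↦ h.2 rfl
  obtain ⟨C, hCsub, hC, heC⟩ := exists_isCircuit_of_mem_closure hcl heA
  have hCAY : C ⊆ A ∪ Y :=
    hCsub.trans (insert_subset (Or.inr heY) (union_subset_union_right A sdiff_subset))
  have hACE : A ∪ C ⊆ M.E := union_subset hA.subset_ground hC.subset_ground
  obtain hZA | hZE := hmax _ (hA.union hC.cyclic).cyclicFlat_closure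
    (subset_union_left.trans (M.subset_closure _ hACE))
  · exact (hY heY).2 (hZA ▸ M.subset_closure _ hACE (Or.inr heC))
  · have hle := nrk_mono (M := M) (union_subset subset_union_left hCAY)
    rw [← nrk_closure, hZE] at hle
    exact hlt.not_ge hle

end RankFinite

section Finite

variable [M.Finite]

lemma cusp_ne_empty_iff (hA : A ⊆ M.E) :
    M.cusp A ≠ ∅ ↔ M.nrk A < A.ncard ∧ M.nrk A < M.nRank := by
  have hfin : ∀ {X}, X ⊆ M.E → X.Finite := fun hX ↦ M.ground_finite.subset hX
  rw [← nonempty_iff_ne_empty]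
  constructor
  · rintro ⟨S, hSE, hScard, hSA⟩
    have h1 : (S ∩ A).ncard ≤ A.ncard := ncard_le_ncard inter_subset_right (hfin hA)
    have h2 : (S ∩ A).ncard ≤ S.ncard := ncard_le_ncard inter_subset_left (hfin hSE)
    omega
  · rintro ⟨hdep, hspan⟩
    have hcompl : M.nRank ≤ M.nrk A + (M.E \ A).ncard := by
      have h := nrk_union_le_nrk_add_ncard (M := M) (X := A) (hfin (sdiff_subset (t := A)))
      rwa [union_sdiff_cancel hA] at h
    obtain ⟨T, hTA, hTcard⟩ := exists_subset_card_eq (show M.nrk A + 1 ≤ A.ncard by omega)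
    obtain ⟨U, hUA, hUcard⟩ :=
      exists_subset_card_eq (show M.nRank - (M.nrk A + 1) ≤ (M.E \ A).ncard by omega)
    have hdisj : Disjoint T U := disjoint_left.2 fun x hxT hxU ↦ (hUA hxU).2 (hTA hxT)
    refine ⟨T ∪ U, union_subset (hTA.trans hA) (hUA.trans sdiff_subset), ?_, ?_⟩
    · rw [ncard_union_eq hdisj (hfin (hTA.trans hA)) (hfin (hUA.trans sdiff_subset)), hTcard,
        hUcard]
      omega
    · rw [← hTcard]
      exact ncard_le_ncard (subset_inter subset_union_left hTA) (hfin (inter_subset_right.trans hA))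

namespace StressedSubset

lemma isFlat (h : M.StressedSubset A) (hA : A ⊆ M.E) (hspan : M.nrk A < M.nRank) :
    M.IsFlat A := by
  refine isFlat_iff_closure_eq.2 (subset_antisymm (fun e he ↦ by_contra fun heA ↦ ?_)
    (M.subset_closure A hA))
  have hins := h.2 {e} (singleton_subset_iff.2 ⟨M.mem_ground_of_mem_closure he, heA⟩)
  have hle := nrk_le_of_subset_closure (insert_subset he (M.subset_closure A hA))
  rw [union_singleton, ncard_singleton] at hins
  omega

lemma isCircuit_of_ncard_eq (h : M.StressedSubset A) (hA : A ⊆ M.E) (hCA : C ⊆ A)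
    (hC : C.ncard = M.nrk A + 1) : M.IsCircuit C := by
  have hfin : ∀ {D}, D ⊆ A → D.Finite := fun hD ↦ M.ground_finite.subset (hD.trans hA)
  have hCdep : M.Dep C := by
    refine ⟨fun hi ↦ ?_, hCA.trans hA⟩
    have hrk := h.1 C hCA
    rw [hi.nrk_eq_ncard] at hrk
    omega
  refine isCircuit_iff.2 ⟨hCdep, fun D hD hDC ↦ eq_of_subset_of_ncard_le hDC ?_ (hfin hCA)⟩
  have h1 := h.1 D (hDC.trans hCA)
  have h2 := hD.nrk_lt_ncard (hfin (hDC.trans hCA))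
  omega

lemma cyclic (h : M.StressedSubset A) (hA : A ⊆ M.E) (hdep : M.nrk A < A.ncard) : M.Cyclic A := by
  intro e he
  have hAfin : A.Finite := M.ground_finite.subset hA
  have hAe := ncard_sdiff_singleton_add_one he hAfin
  obtain ⟨B, hB, hBcard⟩ :=
    exists_subset_card_eq (show M.nrk A ≤ (A \ {e}).ncard by omega)
  have heB : e ∉ B := fun h ↦ (hB h).2 rfl
  have hBA : insert e B ⊆ A := insert_subset he (hB.trans sdiff_subset)
  refine ⟨insert e B, hBA, h.isCircuit_of_ncard_eq hA hBA ?_, mem_insert e B⟩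
  rw [ncard_insert_of_notMem heB (hAfin.subset (hB.trans sdiff_subset)), hBcard]

lemma subset_closure_of_dep (h : M.StressedSubset A) (hA : A ⊆ M.E) (hSA : S ⊆ A)
    (hS : M.Dep S) : A ⊆ M.closure S := by
  have h1 := h.1 S hSA
  have h2 := hS.nrk_lt_ncard (M.ground_finite.subset hS.subset_ground)
  rw [closure_eq_closure_of_subset_of_nrk_le hSA (by omega)]
  exact M.subset_closure A hA

lemma eq_of_cyclicFlat_subset (h : M.StressedSubset A) (hA : A ⊆ M.E) (hZ : M.CyclicFlat Z)
    (hZA : Z ⊆ A) (hZne : Z.Nonempty) : Z = A := by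
  refine hZA.antisymm ?_
  rw [← hZ.1.closure]
  exact h.subset_closure_of_dep hA hZA (hZ.2.dep hZne)

lemma eq_of_cyclicFlat_superset (h : M.StressedSubset A) (hZ : M.CyclicFlat Z) (hAZ : A ⊆ Z)
    (hZE : Z ≠ M.E) : Z = A := by
  refine subset_antisymm (fun e heZ ↦ by_contra fun heA ↦ ?_) hAZ
  have hY : Z \ A ⊆ M.E \ A := sdiff_subset_sdiff_left hZ.1.subset_ground
  have hZe : A ∪ ((Z \ A) \ {e}) = Z \ {e} := by
    ext x
    by_cases hx : x = e <;> grind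
  have h1 := h.2 (Z \ A) hY
  have h2 := h.2 ((Z \ A) \ {e}) (sdiff_subset.trans hY)
  rw [union_sdiff_cancel hAZ] at h1
  rw [hZe, hZ.2.nrk_sdiff_singleton] at h2
  have h3 := ncard_sdiff_singleton_add_one (s := Z \ A) ⟨heZ, heA⟩
    (M.ground_finite.subset (sdiff_subset.trans hZ.1.subset_ground))
  have hk := hZ.1.nrk_lt_nRank hZE
  omega

end StressedSubset

lemma stressedSubset_of_cyclicFlat (hA : M.CyclicFlat A)
    (hmin : ∀ Z, M.CyclicFlat Z → Z ⊆ A → Z = ∅ ∨ Z = A)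
    (hmax : ∀ Z, M.CyclicFlat Z → A ⊆ Z → Z = A ∨ Z = M.E) : M.StressedSubset A := by
  have hfin : ∀ {X}, X ⊆ M.E → X.Finite := fun hX ↦ M.ground_finite.subset hX
  refine ⟨fun S hSA ↦ ?_, fun Y hY ↦ ?_⟩
  · have hSE := hSA.trans hA.1.subset_ground
    have hle := nrk_mono (M := M) hSA
    obtain hS | hS := M.indep_or_dep hSE
    · rw [hS.nrk_eq_ncard] at hle ⊢
      omega
    · have h1 := nrk_eq_of_dep_subset hA.1 hmin hSA hS
      have h2 := nrk_le_ncard (M := M) (hfin hSE)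
      omega
  · have hYfin := hfin (hY.trans sdiff_subset)
    have hle := nrk_union_le_nrk_add_ncard (M := M) (X := A) hYfin
    have hAY := nrk_mono (M := M) (subset_union_left (s := A) (t := Y))
    obtain hlt | heq := (nrk_le_nRank (M := M) (A ∪ Y)).lt_or_eq
    · have hrk := nrk_union_eq_nrk_add_ncard_of_lt hA.2 hmax hY hYfin hlt
      omega
    · omega

end Finite

end Matroid

theorem stressed_nonempty_cusp_iff_cyclic_flat_cover_general (M : Matroid α) (hfin : M.E.Finite)
    {A : Set α} (hA : A ⊆ M.E) :
    (M.StressedSubset A ∧ M.cusp A ≠ ∅) ↔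
      (M.CyclicFlat A ∧ A ≠ ∅ ∧ A ≠ M.E ∧
        (∀ Z, M.CyclicFlat Z → Z ⊆ A → Z = ∅ ∨ Z = A) ∧
        (∀ Z, M.CyclicFlat Z → A ⊆ Z → Z = A ∨ Z = M.E)) := by
  have : M.Finite := ⟨hfin⟩
  rw [Matroid.cusp_ne_empty_iff hA]
  constructor
  · rintro ⟨hS, hdep, hspan⟩
    refine ⟨⟨hS.isFlat hA hspan, hS.cyclic hA hdep⟩, ?_, ?_, ?_, ?_⟩
    · rintro rfl
      simp at hdep
    · rintro rfl
      exact lt_irrefl _ hspan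
    · exact fun Z hZ hZA ↦
        (eq_empty_or_nonempty Z).imp_right (hS.eq_of_cyclicFlat_subset hA hZ hZA)
    · exact fun Z hZ hAZ ↦ (em (Z = M.E)).symm.imp_left (hS.eq_of_cyclicFlat_superset hZ hAZ)
  · rintro ⟨hAcf, hne, hAE, hmin, hmax⟩
    exact ⟨Matroid.stressedSubset_of_cyclicFlat hAcf hmin hmax,
      (hAcf.2.dep (nonempty_iff_ne_empty.2 hne)).nrk_lt_ncard (hfin.subset hA),
      hAcf.1.nrk_lt_nRank hAE⟩

/-- for a loopless and coloopless matroid `M`, a subset `A` is a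
stressed subset with non-empty cusp if and only if `A` is a cyclic flat that covers the
bottom element `∅` and is covered by the top element `E` in the lattice of cyclic flats
of `M`. -/
theorem stressed_nonempty_cusp_iff_cyclic_flat_cover (M : Matroid α) (hfin : M.E.Finite)
    (hloopless : ∀ e ∈ M.E, M.Indep {e}) (hcoloopless : ∀ e ∈ M.E, M✶.Indep {e})
    {A : Set α} (hA : A ⊆ M.E) :
    (M.StressedSubset A ∧ M.cusp A ≠ ∅) ↔
      (M.CyclicFlat A ∧ A ≠ ∅ ∧ A ≠ M.E ∧
        (∀ Z, M.CyclicFlat Z → Z ⊆ A → Z = ∅ ∨ Z = A) ∧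
        (∀ Z, M.CyclicFlat Z → A ⊆ Z → Z = A ∨ Z = M.E)) :=
  stressed_nonempty_cusp_iff_cyclic_flat_cover_general M hfin hA
end
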